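/- If a monoid action M ↷ X by injections admits a big Ramsey colouring with k colours and also has finite big Ramsey degree t, then k = t. -/

import Mathlib

def HasDegLE (M X : Type) [Monoid M] [MulAction M X] (t : ℕ) : Prop :=
  ∀ (l : ℕ) (ψ : X → Fin l), ∃ p : M,
    (ψ '' Set.range (fun x : X => p • x)).ncard ≤ t

def Persistent (M X : Type) [Monoid M] [MulAction M X] {k : ℕ} (χ : X → Fin k) : Prop :=
  ∀ p : M, Set.range (fun x : X => χ (p • x)) = Set.univ

def UniversalCol (M X : Type) [Monoid M] [MulAction M X] {k : ℕ} (χ : X → Fin k) : Prop :=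
  ∀ (l : ℕ) (ψ : X → Fin l) (p : M), ∃ (q : M) (f : Fin k → Fin l),
    ∀ x : X, ψ ((p * q) • x) = f (χ ((p * q) • x))

/-! Applying the degree bound to `χ` itself shows `k ≤ t`, because by persistence `χ` keeps all
`k` colours on every `p • X`. Conversely, universality factors any colouring `ψ` through `χ` on
some `q • X`, where `ψ` therefore takes at most `k` values; so `k` is a degree bound and `t ≤ k`
by minimality. -/

section

variable {M X : Type} [Monoid M] [MulAction M X]

theorem image_range_smul {Y : Type*} (ψ : X → Y) (p : M) :
    ψ '' Set.range (fun x : X => p • x) = Set.range (fun x : X => ψ (p • x)) :=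
  (Set.range_comp ψ _).symm

theorem Persistent.le_of_hasDegLE {k t : ℕ} {χ : X → Fin k} (hpers : Persistent M X χ)
    (hdeg : HasDegLE M X t) : k ≤ t := by
  obtain ⟨p, hp⟩ := hdeg k χ
  simpa [image_range_smul, hpers p] using hp

theorem UniversalCol.hasDegLE {k : ℕ} {χ : X → Fin k} (huniv : UniversalCol M X χ) :
    HasDegLE M X k := by
  intro l ψ
  obtain ⟨q, f, hf⟩ := huniv l ψ 1
  refine ⟨1 * q, ?_⟩
  have hsub : Set.range (fun x : X => ψ ((1 * q) • x)) ⊆ Set.range f := by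
    rintro _ ⟨x, rfl⟩
    exact ⟨_, (hf x).symm⟩
  calc (ψ '' Set.range (fun x : X => (1 * q) • x)).ncard
      ≤ (Set.range f).ncard := by
        rw [image_range_smul]
        exact Set.ncard_le_ncard hsub (Set.finite_range f)
    _ ≤ (Set.univ : Set (Fin k)).ncard := by
        rw [← Set.image_univ]
        exact Set.ncard_image_le
    _ = k := by simp

end

theorem bigRamseyColouring_card_eq_degree_general
    (M X : Type) [Monoid M] [MulAction M X]
    (k : ℕ) (χ : X → Fin k) (hpers : Persistent M X χ) (huniv : UniversalCol M X χ)
    (t : ℕ) (hdeg : HasDegLE M X t) (hmin : ∀ s : ℕ, HasDegLE M X s → t ≤ s) :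
    k = t :=
  le_antisymm (hpers.le_of_hasDegLE hdeg) (hmin k huniv.hasDegLE)

theorem bigRamseyColouring_card_eq_degree
    (M X : Type) [Monoid M] [MulAction M X]
    (hinj : ∀ p : M, Function.Injective (fun x : X => p • x))
    (k : ℕ) (χ : X → Fin k) (hpers : Persistent M X χ) (huniv : UniversalCol M X χ)
    (t : ℕ) (hdeg : HasDegLE M X t) (hmin : ∀ s : ℕ, HasDegLE M X s → t ≤ s) :
    k = t :=
  bigRamseyColouring_card_eq_degree_general M X k χ hpers huniv t hdeg hmin
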